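/- arXiv:2506.03874 — 3 statements merged into one kernel-verified Lean document; each statement's English description precedes it below -/
import Mathlib

section
/- Let $\alpha_1,\ldots,\alpha_{n-2}$ be distinct elements of a field $F$ with $n \geq 5$. Then the determinant of the $(n-2)\times(n-2)$ matrix whose rows are $(1,\ldots,1)$, $(\alpha_1,\ldots,\alpha_{n-2})$, ..., $(\alpha_1^{n-4},\ldots,\alpha_{n-2}^{n-4})$, and $(\alpha_1^{n-1},\ldots,\alpha_{n-2}^{n-1})$ equals $\left(\sum_{i=1}^{n-2}\alpha_i^2 + \sum_{1\le i<j\le n-2}\alpha_i\alpha_j\right)\prod_{1\le i<j\le n-2}(\alpha_j-\alpha_i)$. -/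
open Finset Polynomial


lemma sum_powersetCard_two_aux {F : Type*} [CommRing F] {m : ℕ} (α : Fin m → F) :
    ∑ t ∈ (univ : Finset (Fin m)).powersetCard 2, ∏ x ∈ t, α x
      = ∑ i, ∑ j ∈ Ioi i, α i * α j := by
  rw [← Finset.sum_sigma (univ : Finset (Fin m)) (fun i => Ioi i)
      (fun p => α p.1 * α p.2)]
  refine (Finset.sum_bij' (fun (p : Σ _ : Fin m, Fin m) _ => ({p.1, p.2} : Finset (Fin m)))
    (fun t ht => ⟨t.min' ?_, t.max' ?_⟩) ?_ ?_ ?_ ?_ ?_).symm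
  · exact Finset.card_pos.mp (by rw [(Finset.mem_powersetCard.mp ht).2]; norm_num)
  · exact Finset.card_pos.mp (by rw [(Finset.mem_powersetCard.mp ht).2]; norm_num)
  · rintro ⟨i, j⟩ hp
    have hij : i < j := by simpa [Finset.mem_sigma] using hp
    exact Finset.mem_powersetCard.mpr ⟨Finset.subset_univ _, Finset.card_pair hij.ne⟩
  · intro t ht
    have h2 : t.card = 2 := (Finset.mem_powersetCard.mp ht).2
    have : t.min' _ < t.max' _ := Finset.min'_lt_max'_of_card t (by omega)
    simp [Finset.mem_sigma, Finset.mem_Ioi, this]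
  · rintro ⟨i, j⟩ hp
    have hij : i < j := by simpa [Finset.mem_sigma] using hp
    have hne : ({i, j} : Finset (Fin m)).Nonempty := ⟨i, by simp⟩
    have hmin : ({i, j} : Finset (Fin m)).min' hne = i := by
      apply le_antisymm (Finset.min'_le _ _ (by simp))
      have := Finset.min'_mem ({i, j} : Finset (Fin m)) hne
      rcases Finset.mem_insert.mp this with h | h
      · exact h.ge
      · rw [Finset.mem_singleton] at h; rw [h]; exact hij.le
    have hmax : ({i, j} : Finset (Fin m)).max' hne = j := by
      apply le_antisymm
      · have := Finset.max'_mem ({i, j} : Finset (Fin m)) hne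
        rcases Finset.mem_insert.mp this with h | h
        · rw [h]; exact hij.le
        · rw [Finset.mem_singleton] at h; rw [h]
      · exact Finset.le_max' _ _ (by simp)
    simp [hmin, hmax]
  · intro t ht
    have h2 : t.card = 2 := (Finset.mem_powersetCard.mp ht).2
    have hne : t.Nonempty := Finset.card_pos.mp (by omega)
    have hsub : ({t.min' hne, t.max' hne} : Finset (Fin m)) ⊆ t := by
      intro x hx
      rcases Finset.mem_insert.mp hx with h | h
      · rw [h]; exact Finset.min'_mem _ _
      · simp at h; rw [h]; exact Finset.max'_mem _ _
    refine Finset.eq_of_subset_of_card_le hsub ?_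
    show #t ≤ #({t.min' hne, t.max' hne} : Finset (Fin m))
    rw [h2, Finset.card_pair (Finset.min'_lt_max'_of_card t (by omega)).ne]
  · rintro ⟨i, j⟩ hp
    have hij : i < j := by simpa [Finset.mem_sigma] using hp
    rw [Finset.prod_pair hij.ne]


lemma key_det {F : Type*} [Field F] (m : ℕ) (hm : 3 ≤ m) (α : Fin m → F) :
    Matrix.det (Matrix.of fun i j : Fin m =>
      α j ^ (if (i : ℕ) = m - 1 then m + 1 else (i : ℕ))) =
    ((∑ i, α i ^ 2) + ∑ i, ∑ j ∈ Finset.Ioi i, α i * α j) *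
      ∏ i, ∏ j ∈ Finset.Ioi i, (α j - α i) := by
  classical
  set e1 : F := ∑ i, α i with he1
  set e2 : F := ∑ i, ∑ j ∈ Ioi i, α i * α j with he2
  set T : F := (∑ i, α i ^ 2) + e2 with hT
  -- the symmetric identity e1 * e1 = T + e2
  have hsq : e1 * e1 = T + e2 := by
    have hoff := Finset.sum_sum_Ioi_add_eq_sum_sum_off_diag
      (f := fun j i : Fin m => α j * α i)
    have h1 : e1 * e1 = ∑ i, ∑ j, α j * α i := by
      rw [he1, Finset.sum_mul_sum]
      exact Finset.sum_congr rfl fun i _ => Finset.sum_congr rfl fun j _ => mul_comm _ _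
    have h2 : ∀ i : Fin m, (∑ j, α j * α i)
        = α i ^ 2 + ∑ j ∈ ({i}ᶜ : Finset (Fin m)), α j * α i := by
      intro i
      rw [← Finset.sum_compl_add_sum ({i} : Finset (Fin m)) (fun j => α j * α i),
        Finset.sum_singleton, add_comm, sq]
    have h3 : ∑ i, ∑ j ∈ Ioi i, (α j * α i + α i * α j) = e2 + e2 := by
      rw [he2]
      simp_rw [Finset.sum_add_distrib]
      congr 1
      exact Finset.sum_congr rfl fun i _ => Finset.sum_congr rfl fun j _ => mul_comm _ _
    rw [h1]
    simp_rw [h2]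
    rw [Finset.sum_add_distrib, hT]
    have h4 : ∑ x : Fin m, ∑ j ∈ ({x}ᶜ : Finset (Fin m)), α j * α x = e2 + e2 := by
      rw [← h3]
      convert hoff.symm using 3 with i
    rw [h4]
    ring
  -- polynomials
  set f : F[X] := ∏ i, (X - C (α i)) with hf
  have hfm : f.Monic := monic_prod_of_monic _ _ fun i _ => monic_X_sub_C _
  have hfd : f.natDegree = m := by
    rw [hf, natDegree_prod _ _ fun i _ => X_sub_C_ne_zero _]
    simp
  have hftop : f.coeff m = 1 := by
    have := hfm.coeff_natDegree; rwa [hfd] at this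
  have hfc1 : f.coeff (m - 1) = -e1 := by
    have := prod_X_sub_C_coeff_card_pred (univ : Finset (Fin m)) α (by simp; omega)
    simpa using this
  have hfc2 : f.coeff (m - 2) = e2 := by
    have hcard : Multiset.card ((univ : Finset (Fin m)).val.map α) = m := by simp
    have h1 : f = (((univ : Finset (Fin m)).val.map α).map fun t => X - C t).prod := by
      rw [hf, Multiset.map_map]; rfl
    rw [h1, Multiset.prod_X_sub_C_coeff _ (by rw [hcard]; omega), hcard,
      show m - (m - 2) = 2 by omega, Finset.esymm_map_val,
      sum_powersetCard_two_aux α]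
    simp [he2]
  set g : F[X] := (X + C e1) * f with hg
  have hgm : g.Monic := (monic_X_add_C e1).mul hfm
  have hgd : g.natDegree = m + 1 := by
    rw [hg, (monic_X_add_C e1).natDegree_mul hfm, natDegree_X_add_C, hfd, add_comm]
  have hgcoeff : ∀ N, 1 ≤ N → g.coeff N = f.coeff (N - 1) + e1 * f.coeff N := by
    intro N hN
    rw [hg, add_mul, coeff_add, show N = (N-1)+1 by omega, coeff_X_mul, coeff_C_mul,
      Nat.add_sub_cancel]
  have hgtop : g.coeff (m + 1) = 1 := by
    have := hgm.coeff_natDegree; rwa [hgd] at this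
  have hgm0 : g.coeff m = 0 := by
    rw [hgcoeff m (by omega), hfc1, hftop, mul_one, neg_add_cancel]
  have hgm1 : g.coeff (m - 1) = e2 - e1 * e1 := by
    rw [hgcoeff (m-1) (by omega), show m - 1 - 1 = m - 2 by omega, hfc2, hfc1]
    ring
  have hgeval : ∀ j, g.eval (α j) = 0 := by
    intro j
    rw [hg, eval_mul, hf, eval_prod]
    rw [Finset.prod_eq_zero (Finset.mem_univ j) (by simp)]
    ring
  set h : F[X] := X ^ (m + 1) - C T * X ^ (m - 1) - g with hh
  have hhcoeff : ∀ N, m - 2 < N → h.coeff N = 0 := by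
    intro N hN
    rw [hh]
    simp only [coeff_sub, coeff_C_mul, coeff_X_pow]
    rcases eq_or_lt_of_le (show m - 1 ≤ N by omega) with h1 | h1
    · rw [← h1, hgm1, if_neg (by omega), if_pos rfl]
      linear_combination hsq
    rcases eq_or_lt_of_le (show m ≤ N by omega) with h2 | h2
    · rw [← h2, hgm0, if_neg (by omega), if_neg (by omega)]; ring
    rcases eq_or_lt_of_le (show m + 1 ≤ N by omega) with h3 | h3
    · rw [← h3, hgtop, if_pos rfl, if_neg (by omega)]; ring
    · rw [coeff_eq_zero_of_natDegree_lt (by omega : g.natDegree < N),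
        if_neg (by omega), if_neg (by omega)]; ring
  have hhdeg : h.natDegree < m :=
    lt_of_le_of_lt (natDegree_le_iff_coeff_eq_zero.mpr hhcoeff) (by omega)
  have hheval : ∀ x : F, h.eval x = x ^ (m+1) - T * x ^ (m-1) - g.eval x := by
    intro x; rw [hh]; simp
  -- the matrix
  set V : Matrix (Fin m) (Fin m) F := (Matrix.vandermonde α).transpose with hV
  have hVdef : ∀ i j : Fin m, V i j = α j ^ (i : ℕ) := fun i j => rfl
  set last : Fin m := ⟨m - 1, by omega⟩ with hlast
  set c : Fin m → F := fun k => if (k : ℕ) = m - 1 then T else h.coeff k with hc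
  have hrow : ∀ j : Fin m, (∑ k, c k • V k) j = α j ^ (m + 1) := by
    intro j
    have h0 : (∑ k, c k • V k) j = ∑ k : Fin m, c k * α j ^ (k : ℕ) := by
      rw [Finset.sum_apply]
      exact Finset.sum_congr rfl fun k _ => rfl
    rw [h0, hc]
    rw [Fin.sum_univ_eq_sum_range (fun k => (if k = m - 1 then T else h.coeff k) * α j ^ k) m]
    have hsplit : ∀ k, (if k = m - 1 then T else h.coeff k)
        = h.coeff k + (if k = m - 1 then T else 0) := by
      intro k
      split_ifs with hk
      · rw [hk, hhcoeff (m-1) (by omega), zero_add]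
      · rw [add_zero]
    simp only [hsplit, add_mul]
    rw [Finset.sum_add_distrib]
    have h2 : ∑ k ∈ Finset.range m, (if k = m - 1 then T else 0) * α j ^ k
        = T * α j ^ (m - 1) := by
      rw [Finset.sum_congr rfl (fun k _ => by rw [ite_mul, zero_mul])]
      rw [Finset.sum_ite_eq' (Finset.range m) (m-1) (fun k => T * α j ^ k)]
      rw [if_pos (Finset.mem_range.mpr (by omega))]
    rw [h2, ← eval_eq_sum_range' hhdeg, hheval, hgeval]
    ring
  have hM : (Matrix.of fun i j : Fin m =>
      α j ^ (if (i : ℕ) = m - 1 then m + 1 else (i : ℕ)))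
      = V.updateRow last (∑ k, c k • V k) := by
    ext i j
    rw [Matrix.updateRow_apply]
    by_cases hi : i = last
    · rw [if_pos hi, hrow j, hi, Matrix.of_apply, hlast, if_pos rfl]
    · have : (i : ℕ) ≠ m - 1 := fun hcon => hi (Fin.ext hcon)
      rw [if_neg hi, Matrix.of_apply, if_neg this, hVdef]
  rw [hM, Matrix.det_updateRow_sum]
  have hcl : c last = T := by rw [hc]; simp [hlast]
  rw [hcl, smul_eq_mul, hV, Matrix.det_transpose, Matrix.det_vandermonde]

/-- Determinant of the Vandermonde-type matrix with exponents 0,…,n-4,n-1. -/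
theorem stmt0 {F : Type*} [Field F] (n : ℕ) (hn : 5 ≤ n)
    (α : Fin (n - 2) → F) (hα : Function.Injective α) :
    Matrix.det (Matrix.of fun i j : Fin (n - 2) =>
      α j ^ (if (i : ℕ) = n - 3 then n - 1 else (i : ℕ))) =
    ((∑ i, α i ^ 2) + ∑ i, ∑ j ∈ Finset.Ioi i, α i * α j) *
      ∏ i, ∏ j ∈ Finset.Ioi i, (α j - α i) := by
  have h3 : n - 3 = n - 2 - 1 := by omega
  have h1 : n - 1 = n - 2 + 1 := by omega
  simp only [h3, h1]
  exact key_det (n - 2) (by omega) α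
end

section
/- Let $\alpha_1,\ldots,\alpha_{k-1}$ be distinct elements of a field $F$ with $k \geq 2$, and let $a_1,a_2,a_3 \in F$. The $k\times k$ matrix whose first $k-1$ columns are $(1,\alpha_i,\alpha_i^2,\ldots,\alpha_i^{k-1})^T$ for $i=1,\ldots,k-1$, and whose last column is $(0,\ldots,0,a_1,a_2,a_3)^T$, has determinant $\left(a_1\sum_{1\le i<j\le k-1}\alpha_i\alpha_j - a_2\sum_{i=1}^{k-1}\alpha_i + a_3\right)\prod_{1\le i<j\le k-1}(\alpha_j-\alpha_i)$. -/
/-!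
Write `V(α) = ∏ i < j, (α j - α i)` and `P = ∏ i, (X - α i)`. Expanding along the last column,
the determinant is `∑ s, c s * w s` with cofactors `w s` that depend only on `α`. Over `R[X]`,
the column `(1, X, …, X ^ n)` makes the matrix the Vandermonde matrix of `(α, X)`, whose
determinant is `V(α) * P`; comparing coefficients of `X ^ s` gives `w s = V(α) * P.coeff s`.
The last column only meets the three top coefficients of `P`, which are `e₂(α)`, `-e₁(α)`, `1`.
-/

open Finset Polynomial Matrix

section

variable {R : Type*} [CommRing R] {n : ℕ}

theorem Fin.prod_Ioi_castSucc {M : Type*} [CommMonoid M] (f : Fin (n + 1) → M) (i : Fin n) :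
    ∏ j ∈ Ioi i.castSucc, f j = (∏ j ∈ Ioi i, f j.castSucc) * f (last n) := by
  rw [← Ioc_top, top_eq_last, ← Ioo_insert_right (castSucc_lt_last i), ← map_castSuccEmb_Ioi,
    prod_insert (by simp), prod_map, mul_comm]
  rfl

theorem Fin.prod_Ioi_last {M : Type*} [CommMonoid M] (f : Fin (n + 1) → M) :
    ∏ j ∈ Ioi (last n), f j = 1 := by
  rw [← top_eq_last, Ioi_top, prod_empty]

theorem det_vandermonde_snoc (v : Fin n → R) (x : R) :
    det (vandermonde (Fin.snoc v x : Fin (n + 1) → R)) =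
      (∏ i, (x - v i)) * det (vandermonde v) := by
  simp only [det_vandermonde, Fin.prod_univ_castSucc, Fin.prod_Ioi_castSucc, Fin.prod_Ioi_last,
    Fin.snoc_castSucc, Fin.snoc_last, prod_mul_distrib, mul_one]
  ring

theorem coeff_prod_X_sub_C_card (g : Fin n → R) : (∏ i, (X - C (g i))).coeff n = 1 := by
  nontriviality R
  simpa using (monic_prod_X_sub_C g univ).coeff_natDegree

theorem coeff_prod_X_sub_C_card_pred (g : Fin (n + 1) → R) :
    (∏ i, (X - C (g i))).coeff n = -∑ i, g i := by
  simpa using prod_X_sub_C_coeff_card_pred univ g (by simp)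

theorem coeff_prod_X_sub_C_card_sub_two (g : Fin (n + 2) → R) :
    (∏ i, (X - C (g i))).coeff n = ∑ i, ∑ j ∈ Ioi i, g i * g j := by
  induction n with
  | zero => simp [Fin.prod_univ_two, Fin.sum_univ_succ, coeff_zero_eq_eval_zero]
  | succ n ih =>
    rw [Fin.prod_univ_succ, coeff_X_sub_C_mul, ih, coeff_prod_X_sub_C_card_pred,
      Fin.sum_univ_succ (fun i => ∑ j ∈ Ioi i, g i * g j), Fin.sum_Ioi_zero]
    simp only [Fin.sum_Ioi_succ, ← mul_sum]
    ring

def vandermondeWithLastCol (β : Fin n → R) (c : Fin (n + 1) → R) :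
    Matrix (Fin (n + 1)) (Fin (n + 1)) R :=
  of fun i j => if h : (j : ℕ) < n then β ⟨j, h⟩ ^ (i : ℕ) else c i

def vandermondeCofactor (β : Fin n → R) (i : Fin (n + 1)) : R :=
  (-1) ^ (i + n : ℕ) * det (of fun r s : Fin n => β s ^ (i.succAbove r : ℕ))

theorem det_vandermondeWithLastCol_eq_sum (β : Fin n → R) (c : Fin (n + 1) → R) :
    det (vandermondeWithLastCol β c) = ∑ i, c i * vandermondeCofactor β i := by
  rw [det_succ_column _ (Fin.last n)]
  refine sum_congr rfl fun i _ => ?_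
  simp only [vandermondeWithLastCol, vandermondeCofactor, Fin.succAbove_last, of_apply,
    Fin.val_last, lt_irrefl, dite_false]
  rw [mul_comm ((-1) ^ _) (c i), mul_assoc]
  congr 3
  ext r s
  simp

theorem map_vandermondeCofactor {S : Type*} [CommRing S] (f : R →+* S) (β : Fin n → R)
    (i : Fin (n + 1)) :
    f (vandermondeCofactor β i) = vandermondeCofactor (f ∘ β) i := by
  simp only [vandermondeCofactor, map_mul, map_pow, map_neg, map_one, RingHom.map_det]
  congr 2
  ext
  simp

theorem vandermondeWithLastCol_pow (β : Fin n → R) (x : R) :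
    vandermondeWithLastCol β (fun i => x ^ (i : ℕ)) = (vandermonde (Fin.snoc β x))ᵀ := by
  ext i j
  simp only [vandermondeWithLastCol, vandermonde, Fin.snoc, of_apply, transpose_apply,
    Fin.castSucc_castLT, cast_eq, dite_pow]
  split_ifs <;> rfl

theorem vandermondeCofactor_eq (β : Fin n → R) (s : Fin (n + 1)) :
    vandermondeCofactor β s =
      (∏ i, (X - C (β i))).coeff s * ∏ i, ∏ j ∈ Ioi i, (β j - β i) := by
  have hpoly : ∑ i, C (vandermondeCofactor β i) * X ^ (i : ℕ) =
      (∏ i, (X - C (β i))) * C (∏ i, ∏ j ∈ Ioi i, (β j - β i)) := by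
    calc ∑ i, C (vandermondeCofactor β i) * X ^ (i : ℕ)
        = det (vandermondeWithLastCol (C ∘ β) fun i => X ^ (i : ℕ)) := by
          simp only [det_vandermondeWithLastCol_eq_sum, map_vandermondeCofactor, mul_comm]
      _ = _ := by
          rw [vandermondeWithLastCol_pow, det_transpose, det_vandermonde_snoc, det_vandermonde]
          simp [map_prod]
  rw [← coeff_mul_C, ← hpoly]
  simp [finsetSum_coeff, Fin.val_inj]

theorem det_vandermondeWithLastCol (β : Fin n → R) (c : Fin (n + 1) → R) :
    det (vandermondeWithLastCol β c) =
      (∑ s, c s * (∏ i, (X - C (β i))).coeff s) * ∏ i, ∏ j ∈ Ioi i, (β j - β i) := by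
  simp only [det_vandermondeWithLastCol_eq_sum, vandermondeCofactor_eq, sum_mul, mul_assoc]

theorem det_vandermondeWithLastCol_top_three (α : Fin (n + 1) → R) (a₁ a₂ a₃ : R) :
    det (vandermondeWithLastCol α fun i =>
      if (i : ℕ) + 3 = n + 2 then a₁ else if (i : ℕ) + 2 = n + 2 then a₂
      else if (i : ℕ) + 1 = n + 2 then a₃ else 0) =
    (a₁ * (∑ i, ∑ j ∈ Ioi i, α i * α j) - a₂ * (∑ i, α i) + a₃) *
      ∏ i, ∏ j ∈ Ioi i, (α j - α i) := by
  rw [det_vandermondeWithLastCol]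
  congr 1
  obtain _ | m := n
  · simp [Fin.sum_univ_two]
  · rw [Fin.sum_univ_castSucc, Fin.sum_univ_castSucc, Fin.sum_univ_castSucc,
      sum_eq_zero fun i _ => ?_]
    · simp [coeff_prod_X_sub_C_card, coeff_prod_X_sub_C_card_pred, coeff_prod_X_sub_C_card_sub_two]
      ring
    · have := i.isLt
      rw [if_neg (by simp; omega), if_neg (by simp; omega), if_neg (by simp; omega), zero_mul]

end

theorem stmt5_general {F : Type*} [Field F] (k : ℕ) (hk : 2 ≤ k)
    (α : Fin (k - 1) → F) (a₁ a₂ a₃ : F) :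
    Matrix.det (Matrix.of fun i j : Fin k =>
      if h : (j : ℕ) < k - 1 then α ⟨j, h⟩ ^ (i : ℕ)
      else if (i : ℕ) + 3 = k then a₁
      else if (i : ℕ) + 2 = k then a₂
      else if (i : ℕ) + 1 = k then a₃ else 0) =
    (a₁ * (∑ i, ∑ j ∈ Finset.Ioi i, α i * α j) - a₂ * (∑ i, α i) + a₃) *
      ∏ i, ∏ j ∈ Finset.Ioi i, (α j - α i) := by
  obtain ⟨n, rfl⟩ : ∃ n, k = n + 2 := ⟨k - 2, by omega⟩
  exact det_vandermondeWithLastCol_top_three α a₁ a₂ a₃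

theorem stmt5 {F : Type*} [Field F] (k : ℕ) (hk : 2 ≤ k)
    (α : Fin (k - 1) → F) (hα : Function.Injective α) (a₁ a₂ a₃ : F) :
    Matrix.det (Matrix.of fun i j : Fin k =>
      if h : (j : ℕ) < k - 1 then α ⟨j, h⟩ ^ (i : ℕ)
      else if (i : ℕ) + 3 = k then a₁
      else if (i : ℕ) + 2 = k then a₂
      else if (i : ℕ) + 1 = k then a₃ else 0) =
    (a₁ * (∑ i, ∑ j ∈ Finset.Ioi i, α i * α j) - a₂ * (∑ i, α i) + a₃) *
      ∏ i, ∏ j ∈ Finset.Ioi i, (α j - α i) :=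
  stmt5_general k hk α a₁ a₂ a₃
end

section
/- Let $q$ be a prime power and $\alpha_1,\ldots,\alpha_n$ distinct elements of $\mathbb{F}_q$ with $4 \le k \le n$ and $A \in \mathrm{GL}_3(\mathbb{F}_q)$. If the $k\times(n+3)$ matrix $G$ (first $n$ columns $(1,\alpha_j,\ldots,\alpha_j^{k-1})^T$, last three columns $(0,\ldots,0,a_{1j},a_{2j},a_{3j})^T$) generates a code equal to a Reed–Solomon code $\mathrm{RS}_k(\beta)$ for some $\beta = (\beta_1,\ldots,\beta_{n+3})$ with distinct entries, then there is a quadratic polynomial agreeing with $x \mapsto \eta/(\beta^* - x)$ at the $k > 3$ distinct points $\alpha_1,\ldots,\alpha_k$ for some $\beta^* \notin \{\alpha_1,\ldots,\alpha_k\}$ and $\eta \neq 0$, a contradiction. Hence $\mathrm{GRL}_k(\alpha, \mathbf{1}, A)$ is not a Reed–Solomon code for $k > 3$. -/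
open Finset Polynomial

section ReedSolomon

variable {ι : Type*} {k : ℕ}

theorem exists_degree_lt_of_mem_range_vecMulLinear_pow {R : Type*} [CommRing R]
    {β : ι → R} {v : ι → R}
    (hv : v ∈ LinearMap.range (Matrix.vecMulLinear
      (Matrix.of fun (i : Fin k) (j : ι) => β j ^ (i : ℕ)))) :
    ∃ p : R[X], p.degree < k ∧ ∀ j, v j = p.eval (β j) := by
  obtain ⟨c, rfl⟩ := hv
  refine ⟨∑ i : Fin k, C (c i) * X ^ (i : ℕ), degree_sum_fin_lt c, fun j => ?_⟩
  simp [Matrix.vecMul, dotProduct, eval_finsetSum]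

theorem eq_one_of_mem_range_vecMulLinear_pow {F : Type*} [Field F] (hk : 0 < k)
    {β : ι → F} (hβ : Function.Injective β) {v : ι → F}
    (hv : v ∈ LinearMap.range (Matrix.vecMulLinear
      (Matrix.of fun (i : Fin k) (j : ι) => β j ^ (i : ℕ))))
    (s : Finset ι) (hks : k ≤ #s) (hs : ∀ j ∈ s, v j = 1) : v = 1 := by
  obtain ⟨p, hp_deg, hp_eval⟩ := exists_degree_lt_of_mem_range_vecMulLinear_pow hv
  have hdeg : (p - 1).degree < #s :=
    calc (p - 1).degree ≤ max p.degree (1 : F[X]).degree := degree_sub_le _ _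
      _ < k := max_lt hp_deg (by simpa using hk)
      _ ≤ #s := by exact_mod_cast hks
  have hp : p = 1 := eq_of_degree_sub_lt_of_eval_index_eq s hβ.injOn hdeg
    fun j hj => by simpa [← hp_eval] using hs j hj
  funext j
  simp [hp_eval, hp]

end ReedSolomon

theorem stmt18 {F : Type*} [Field F]
    (n k : ℕ) (hk : 3 < k) (hkn : k ≤ n)
    (α : Fin n → F)
    (A : Matrix (Fin 3) (Fin 3) F)
    (G : Matrix (Fin k) (Fin (n + 3)) F)
    (hG : ∀ i j, G i j =
      if h : (j : ℕ) < n then α ⟨j, h⟩ ^ (i : ℕ)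
      else if (i : ℕ) + 3 = k then A 0 ⟨(j : ℕ) - n, by have := j.isLt; omega⟩
      else if (i : ℕ) + 2 = k then A 1 ⟨(j : ℕ) - n, by have := j.isLt; omega⟩
      else if (i : ℕ) + 1 = k then A 2 ⟨(j : ℕ) - n, by have := j.isLt; omega⟩
      else 0) :
    ∀ β : Fin (n + 3) → F, Function.Injective β →
      LinearMap.range (Matrix.vecMulLinear G) ≠
        LinearMap.range (Matrix.vecMulLinear
          (Matrix.of fun (i : Fin k) (j : Fin (n + 3)) => β j ^ (i : ℕ))) := by
  intro β hβ hRS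
  -- Row 0 of `G` is `(1, …, 1, 0, 0, 0)`: since `k > 3`, no entry of `A` reaches it.
  let i₀ : Fin k := ⟨0, by omega⟩
  have hrow : G i₀ ∈ LinearMap.range (Matrix.vecMulLinear G) :=
    ⟨Pi.single i₀ 1, Matrix.single_one_vecMul i₀ G⟩
  rw [hRS] at hrow
  have hone := eq_one_of_mem_range_vecMulLinear_pow (by omega) hβ hrow
    (univ.map (Fin.castAddEmb 3)) (by simpa using hkn) (by simp [hG, i₀])
  have hlast := congrFun hone ⟨n, by omega⟩
  simp only [hG, i₀, lt_irrefl, dite_false, Pi.one_apply] at hlast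
  rw [if_neg (by omega), if_neg (by omega), if_neg (by omega)] at hlast
  exact zero_ne_one hlast
end
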